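/- arXiv:2004.09158 — 2 statements merged into one kernel-verified Lean document; each statement's English description precedes it below -/
import Mathlib

section
/- For a positive definite symmetric d×d real matrix D, among all real d×d matrices A with determinant 1, the minimum of trace(A D Aᵀ) equals d · (det D)^(1/d). -/
open Matrix
open scoped MatrixOrder

/-!
By AM-GM on the eigenvalues of the positive semidefinite matrix `A D Aᵀ`, its trace is at least
`d · det(A D Aᵀ)^(1/d) = d · (det D)^(1/d)` when `det A = 1`. Equality holds for
`A = (det D)^(1/2d) · D^(-1/2)`, which turns `D` into a multiple of the identity.
-/

namespace Matrix

variable {n : Type*} [Fintype n] [DecidableEq n]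

theorem PosSemidef.card_mul_det_rpow_le_trace {M : Matrix n n ℝ} (hM : M.PosSemidef) :
    Fintype.card n * M.det ^ ((1 : ℝ) / Fintype.card n) ≤ M.trace := by
  rcases isEmpty_or_nonempty n with _ | _
  · simp
  set ev := hM.isHermitian.eigenvalues
  have hcard : (0 : ℝ) < Fintype.card n := by exact_mod_cast Fintype.card_pos
  have amgm := Real.geom_mean_le_arith_mean Finset.univ (fun _ ↦ 1) ev
    (fun _ _ ↦ zero_le_one) (by simpa using hcard) (fun i _ ↦ hM.eigenvalues_nonneg i)
  simp only [Real.rpow_one, Finset.sum_const, Finset.card_univ, nsmul_eq_mul, mul_one,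
    one_mul] at amgm
  rw [hM.isHermitian.det_eq_prod_eigenvalues, hM.isHermitian.trace_eq_sum_eigenvalues, one_div]
  simp only [RCLike.ofReal_real_eq_id, id]
  rw [le_div_iff₀ hcard] at amgm
  linarith

theorem PosDef.exists_det_eq_one_mul_mul_transpose_eq_smul_one {D : Matrix n n ℝ}
    (hD : D.PosDef) :
    ∃ A : Matrix n n ℝ, A.det = 1 ∧ A * D * Aᵀ = D.det ^ ((1 : ℝ) / Fintype.card n) • 1 := by
  rcases isEmpty_or_nonempty n with _ | _
  · exact ⟨1, det_isEmpty, Subsingleton.elim _ _⟩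
  set S := CFC.sqrt D
  have hSS : S * S = D := CFC.sqrt_mul_sqrt_self D hD.posSemidef.nonneg
  have hSsymm : Sᵀ = S := by
    rw [← conjTranspose_eq_transpose_of_trivial]; exact (CFC.sqrt_nonneg D).posSemidef.1
  have hdetS : S.det = √D.det := by
    simpa using hD.posSemidef.det_sqrt
  have hdetS_pos : 0 < S.det := hdetS ▸ Real.sqrt_pos.mpr hD.det_pos
  have hSunit : IsUnit S.det := hdetS_pos.ne'.isUnit
  set c := S.det ^ ((1 : ℝ) / Fintype.card n) with hc_def
  refine ⟨c • S⁻¹, ?_, ?_⟩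
  · rw [det_smul, det_nonsing_inv, Ring.inverse_eq_inv', hc_def, one_div,
      Real.rpow_inv_natCast_pow hdetS_pos.le Fintype.card_ne_zero, mul_inv_cancel₀ hdetS_pos.ne']
  · have hc : c * c = D.det ^ ((1 : ℝ) / Fintype.card n) := by
      rw [hc_def, ← Real.mul_rpow hdetS_pos.le hdetS_pos.le, ← det_mul, hSS]
    have hSDS : S⁻¹ * D * S⁻¹ = 1 := by
      rw [← hSS, ← Matrix.mul_assoc, nonsing_inv_mul _ hSunit, Matrix.one_mul,
        mul_nonsing_inv _ hSunit]
    rw [transpose_smul, transpose_nonsing_inv, hSsymm, Matrix.smul_mul, Matrix.smul_mul,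
      Matrix.mul_smul, hSDS, smul_smul, hc]

end Matrix

theorem stmt0_general (d : ℕ) (D : Matrix (Fin d) (Fin d) ℝ) (hD : D.PosDef) :
    IsLeast {t : ℝ | ∃ A : Matrix (Fin d) (Fin d) ℝ, A.det = 1 ∧ t = (A * D * Aᵀ).trace}
      ((d : ℝ) * D.det ^ ((1 : ℝ) / d)) := by
  constructor
  · obtain ⟨A, hA, hADA⟩ := hD.exists_det_eq_one_mul_mul_transpose_eq_smul_one
    refine ⟨A, hA, ?_⟩
    rw [hADA, trace_smul, trace_one, Fintype.card_fin, smul_eq_mul, mul_comm]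
  · rintro _ ⟨A, hA, rfl⟩
    have hPSD := hD.posSemidef.mul_mul_conjTranspose_same A
    rw [conjTranspose_eq_transpose_of_trivial] at hPSD
    simpa [det_mul, hA] using hPSD.card_mul_det_rpow_le_trace

theorem stmt0 (d : ℕ) (hd : 1 ≤ d) (D : Matrix (Fin d) (Fin d) ℝ) (hD : D.PosDef) :
    IsLeast {t : ℝ | ∃ A : Matrix (Fin d) (Fin d) ℝ, A.det = 1 ∧ t = (A * D * Aᵀ).trace}
      ((d : ℝ) * D.det ^ ((1 : ℝ) / d)) :=
  stmt0_general d D hD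
end

section
/- Let g : ℕ → ℝ≥0 with g(0)=0, g(k)>0 for k>0, sup_k |g(k+1)−g(k)| = g* < ∞, and suppose Z(φ) = ∑_k φ^k/g(k)! < ∞ for all φ ≥ 0. Define R(φ) := E_{ν̄_φ}[η] = (1/Z(φ)) ∑_k k φ^k/g(k)!. Then the inverse function Ψ of R is uniformly Lipschitz on ℝ₊ with Lipschitz constant g*. -/
/-!
Instead of differentiating `R`, compare `ν̄_ψ` and `ν̄_φ` for `ψ ≤ φ` directly: their likelihood
ratio `(φ / ψ) ^ k` is increasing in `k`, so by a Chebyshev-type symmetrisation every increasing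
`f` has a larger mean under `ν̄_φ`. Take `f k = g* k - g k`, increasing because the increments of
`g` are at most `g*`. Since `g (k + 1) / g (k + 1)! = 1 / g k!`, the `ν̄_φ`-mean of `g` is `φ`,
so the mean of `f` is `g* R(φ) - φ`; hence `φ - ψ ≤ g* (R(φ) - R(ψ))`, which at `φ = Ψ α`,
`ψ = Ψ β` is the Lipschitz bound.
-/

theorem tsum_le_tsum_of_add_swap_le {α : Type*} {F G : α × α → ℝ}
    (hF : Summable F) (hG : Summable G) (h : ∀ p, F p + F p.swap ≤ G p + G p.swap) :
    ∑' p, F p ≤ ∑' p, G p := by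
  have hswap : ∀ H : α × α → ℝ, ∑' p : α × α, H p.swap = ∑' p, H p :=
    (Equiv.prodComm α α).tsum_eq
  have := hF.add hF.prod_symm |>.tsum_le_tsum h (hG.add hG.prod_symm)
  rw [hF.tsum_add hF.prod_symm, hG.tsum_add hG.prod_symm, hswap, hswap] at this
  linarith

theorem tsum_mul_tsum_le_of_monotone {ι : Type*} [LinearOrder ι] {f a b : ι → ℝ}
    (hf : Monotone f) (hab : ∀ ⦃j k⦄, j ≤ k → a k * b j ≤ b k * a j)
    (ha : Summable a) (hb : Summable b) (hfa : Summable fun k ↦ f k * a k)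
    (hfb : Summable fun k ↦ f k * b k) :
    (∑' k, f k * a k) * ∑' j, b j ≤ (∑' k, f k * b k) * ∑' j, a j := by
  rw [tsum_mul_tsum_of_summable_norm hfa.norm hb.norm,
    tsum_mul_tsum_of_summable_norm hfb.norm ha.norm]
  refine tsum_le_tsum_of_add_swap_le (summable_mul_of_summable_norm hfa.norm hb.norm)
    (summable_mul_of_summable_norm hfb.norm ha.norm) fun ⟨k, j⟩ ↦ ?_
  -- after symmetrising, the difference is `(f k - f j) * (b k * a j - a k * b j)`, with like signs
  have : 0 ≤ (f k - f j) * (b k * a j - a k * b j) := by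
    rcases le_total j k with hjk | hkj
    · exact mul_nonneg (sub_nonneg.2 (hf hjk)) (sub_nonneg.2 (hab hjk))
    · exact mul_nonneg_of_nonpos_of_nonpos (sub_nonpos.2 (hf hkj))
        (by linarith [hab hkj])
  simp only [Prod.swap_prod_mk]
  linarith

theorem pow_mul_pow_le_pow_mul_pow {ψ φ : ℝ} (hψ : 0 ≤ ψ) (hψφ : ψ ≤ φ) {j k : ℕ} (hjk : j ≤ k) :
    ψ ^ k * φ ^ j ≤ φ ^ k * ψ ^ j := by
  obtain ⟨d, rfl⟩ := Nat.exists_eq_add_of_le hjk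
  have hφ : 0 ≤ φ := hψ.trans hψφ
  calc ψ ^ (j + d) * φ ^ j = ψ ^ j * φ ^ j * ψ ^ d := by ring
    _ ≤ ψ ^ j * φ ^ j * φ ^ d := by gcongr
    _ = φ ^ (j + d) * ψ ^ j := by ring

/-- The mean of `f` under the weights `x ^ k / c k`; for `c = g!` this is `E_{ν̄_x}[f]`. -/
noncomputable def tiltedMean (c f : ℕ → ℝ) (x : ℝ) : ℝ :=
  (∑' k, f k * x ^ k / c k) / ∑' k, x ^ k / c k

theorem tsum_pow_div_pos {c : ℕ → ℝ} (hc : ∀ k, 0 < c k) {x : ℝ} (hx : 0 ≤ x)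
    (hZ : Summable fun k ↦ x ^ k / c k) : 0 < ∑' k, x ^ k / c k :=
  hZ.tsum_pos (fun k ↦ div_nonneg (pow_nonneg hx k) (hc k).le) 0 (by simpa using hc 0)

theorem tiltedMean_mono {c f : ℕ → ℝ} (hc : ∀ k, 0 < c k) (hf : Monotone f) {ψ φ : ℝ}
    (hψ : 0 ≤ ψ) (hψφ : ψ ≤ φ)
    (hZψ : Summable fun k ↦ ψ ^ k / c k) (hZφ : Summable fun k ↦ φ ^ k / c k)
    (hfψ : Summable fun k ↦ f k * ψ ^ k / c k) (hfφ : Summable fun k ↦ f k * φ ^ k / c k) :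
    tiltedMean c f ψ ≤ tiltedMean c f φ := by
  have hratio : ∀ ⦃j k : ℕ⦄, j ≤ k →
      ψ ^ k / c k * (φ ^ j / c j) ≤ φ ^ k / c k * (ψ ^ j / c j) := fun j k hjk ↦ by
    rw [div_mul_div_comm, div_mul_div_comm]
    exact div_le_div_of_nonneg_right (pow_mul_pow_le_pow_mul_pow hψ hψφ hjk)
      (mul_pos (hc k) (hc j)).le
  have key := tsum_mul_tsum_le_of_monotone hf hratio hZψ hZφ
    (by simpa only [mul_div_assoc] using hfψ) (by simpa only [mul_div_assoc] using hfφ)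
  simp only [← mul_div_assoc] at key
  rwa [tiltedMean, tiltedMean, div_le_div_iff₀ (tsum_pow_div_pos hc hψ hZψ)
    (tsum_pow_div_pos hc (hψ.trans hψφ) hZφ)]

theorem tiltedMean_mul_sub {c f h : ℕ → ℝ} (s : ℝ) {x : ℝ}
    (hf : Summable fun k ↦ f k * x ^ k / c k) (hh : Summable fun k ↦ h k * x ^ k / c k) :
    tiltedMean c (fun k ↦ s * f k - h k) x = s * tiltedMean c f x - tiltedMean c h x := by
  have hterm : ∀ k, (s * f k - h k) * x ^ k / c k = s * (f k * x ^ k / c k) - h k * x ^ k / c k :=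
    fun k ↦ by ring
  simp only [tiltedMean, hterm]
  rw [(hf.mul_left s).tsum_sub hh, tsum_mul_left]
  ring

theorem summable_natCast_mul_pow_div {c : ℕ → ℝ} (hc : ∀ k, 0 ≤ c k) {x : ℝ} (hx : 0 ≤ x)
    (hZ : Summable fun k ↦ (2 * x) ^ k / c k) : Summable fun k : ℕ ↦ (k : ℝ) * x ^ k / c k := by
  refine hZ.of_nonneg_of_le (fun k ↦ by have := hc k; positivity) fun k ↦ ?_
  rw [mul_pow]
  gcongr
  · exact hc k
  · exact_mod_cast k.lt_two_pow_self.le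

theorem hasSum_mul_pow_div {g c : ℕ → ℝ} (hg0 : g 0 = 0) (hg : ∀ k, g (k + 1) ≠ 0)
    (hc : ∀ k, c (k + 1) = c k * g (k + 1)) {x Z : ℝ} (hZ : HasSum (fun k ↦ x ^ k / c k) Z) :
    HasSum (fun k ↦ g k * x ^ k / c k) (x * Z) := by
  rw [← hasSum_nat_add_iff' 1]
  simp only [Finset.range_one, Finset.sum_singleton, hg0, zero_mul, zero_div, sub_zero]
  refine (hZ.mul_left x).congr_fun fun k ↦ ?_
  rw [hc, pow_succ, mul_comm (c k), ← div_div, mul_div_cancel_left₀ _ (hg k)]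
  ring

theorem tiltedMean_eq_self {g c : ℕ → ℝ} (hg0 : g 0 = 0) (hg : ∀ k, g (k + 1) ≠ 0)
    (hc : ∀ k, c (k + 1) = c k * g (k + 1)) {x : ℝ} (hZ : Summable fun k ↦ x ^ k / c k)
    (hZ0 : ∑' k, x ^ k / c k ≠ 0) : tiltedMean c g x = x := by
  rw [tiltedMean, (hasSum_mul_pow_div hg0 hg hc hZ.hasSum).tsum_eq, mul_div_cancel_right₀ _ hZ0]

theorem monotone_mul_natCast_sub {g : ℕ → ℝ} {s : ℝ} (h : ∀ k, |g (k + 1) - g k| ≤ s) :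
    Monotone fun k : ℕ ↦ s * k - g k :=
  monotone_nat_of_le_succ fun k ↦ by
    have := (abs_le.1 (h k)).2
    push_cast
    linarith

theorem sub_le_mul_tiltedMean_natCast_sub {g c : ℕ → ℝ} {s : ℝ} (hg0 : g 0 = 0)
    (hg : ∀ k, 0 < g (k + 1)) (hgs : ∀ k, |g (k + 1) - g k| ≤ s) (hc0 : ∀ k, 0 < c k)
    (hc : ∀ k, c (k + 1) = c k * g (k + 1)) (hZ : ∀ x, 0 ≤ x → Summable fun k ↦ x ^ k / c k)
    {ψ φ : ℝ} (hψ : 0 ≤ ψ) (hψφ : ψ ≤ φ) :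
    φ - ψ ≤ s * (tiltedMean c (↑) φ - tiltedMean c (↑) ψ) := by
  have hg' : ∀ k, g (k + 1) ≠ 0 := fun k ↦ (hg k).ne'
  have hN : ∀ x, 0 ≤ x → Summable fun k : ℕ ↦ (k : ℝ) * x ^ k / c k := fun x hx ↦
    summable_natCast_mul_pow_div (fun k ↦ (hc0 k).le) hx (hZ _ (by positivity))
  have hG : ∀ x, 0 ≤ x → Summable fun k ↦ g k * x ^ k / c k := fun x hx ↦
    (hasSum_mul_pow_div hg0 hg' hc (hZ x hx).hasSum).summable
  have hF : ∀ x, 0 ≤ x → Summable fun k ↦ (s * k - g k) * x ^ k / c k := fun x hx ↦ by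
    refine (((hN x hx).mul_left s).sub (hG x hx)).congr fun k ↦ ?_
    ring
  have hmean : ∀ x, 0 ≤ x → tiltedMean c (fun k ↦ s * k - g k) x = s * tiltedMean c (↑) x - x :=
    fun x hx ↦ by
      rw [tiltedMean_mul_sub s (hN x hx) (hG x hx),
        tiltedMean_eq_self hg0 hg' hc (hZ x hx) (tsum_pow_div_pos hc0 hx (hZ x hx)).ne']
  have hφ : 0 ≤ φ := hψ.trans hψφ
  have := tiltedMean_mono hc0 (monotone_mul_natCast_sub hgs) hψ hψφ (hZ ψ hψ) (hZ φ hφ)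
    (hF ψ hψ) (hF φ hφ)
  rw [hmean ψ hψ, hmean φ hφ] at this
  linarith

theorem stmt7_general (g : ℕ → ℝ) (h0 : g 0 = 0) (hpos : ∀ k, 0 < k → 0 < g k)
    (gstar : ℝ) (hgs : ∀ k, |g (k + 1) - g k| ≤ gstar)
    (gfact : ℕ → ℝ) (hgfact : ∀ k, gfact k = ∏ i ∈ Finset.range k, g (i + 1))
    (hZ : ∀ φ : ℝ, 0 ≤ φ → Summable (fun k : ℕ => φ ^ k / gfact k))
    (R : ℝ → ℝ)
    (hR : ∀ φ : ℝ, 0 ≤ φ →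
      R φ = (∑' k : ℕ, (k : ℝ) * φ ^ k / gfact k) / (∑' k : ℕ, φ ^ k / gfact k))
    (Ψ : ℝ → ℝ) (hΨpos : ∀ α, 0 ≤ α → 0 ≤ Ψ α)
    (hRΨ : ∀ α, 0 ≤ α → R (Ψ α) = α) :
    ∀ α β : ℝ, 0 ≤ α → 0 ≤ β → |Ψ α - Ψ β| ≤ gstar * |α - β| := by
  have hgpos : ∀ k, 0 < g (k + 1) := fun k ↦ hpos _ k.succ_pos
  have hfact_pos : ∀ k, 0 < gfact k := fun k ↦ hgfact k ▸ Finset.prod_pos fun i _ ↦ hgpos i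
  have hfact_succ : ∀ k, gfact (k + 1) = gfact k * g (k + 1) := fun k ↦ by
    rw [hgfact, hgfact, Finset.prod_range_succ]
  have hmean : ∀ α, 0 ≤ α → tiltedMean gfact (↑) (Ψ α) = α := fun α hα ↦
    (hR _ (hΨpos α hα)).symm.trans (hRΨ α hα)
  have hgstar : 0 ≤ gstar := (abs_nonneg _).trans (hgs 0)
  have hlip : ∀ α β, 0 ≤ α → 0 ≤ β → Ψ β ≤ Ψ α → |Ψ α - Ψ β| ≤ gstar * |α - β| := by
    intro α β hα hβ h
    have := sub_le_mul_tiltedMean_natCast_sub h0 hgpos hgs hfact_pos hfact_succ hZ (hΨpos β hβ) h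
    rw [hmean α hα, hmean β hβ] at this
    rw [abs_of_nonneg (sub_nonneg.2 h)]
    exact this.trans (mul_le_mul_of_nonneg_left (le_abs_self _) hgstar)
  intro α β hα hβ
  rcases le_total (Ψ β) (Ψ α) with h | h
  · exact hlip α β hα hβ h
  · rw [abs_sub_comm, abs_sub_comm α]
    exact hlip β α hβ hα h

theorem stmt7 (g : ℕ → ℝ) (h0 : g 0 = 0) (hg : ∀ k, 0 ≤ g k) (hpos : ∀ k, 0 < k → 0 < g k)
    (gstar : ℝ) (hgs : ∀ k, |g (k + 1) - g k| ≤ gstar)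
    (gfact : ℕ → ℝ) (hgfact : ∀ k, gfact k = ∏ i ∈ Finset.range k, g (i + 1))
    (hZ : ∀ φ : ℝ, 0 ≤ φ → Summable (fun k : ℕ => φ ^ k / gfact k))
    (R : ℝ → ℝ)
    (hR : ∀ φ : ℝ, 0 ≤ φ →
      R φ = (∑' k : ℕ, (k : ℝ) * φ ^ k / gfact k) / (∑' k : ℕ, φ ^ k / gfact k))
    (Ψ : ℝ → ℝ) (hΨpos : ∀ α, 0 ≤ α → 0 ≤ Ψ α)
    (hΨR : ∀ φ, 0 ≤ φ → Ψ (R φ) = φ) (hRΨ : ∀ α, 0 ≤ α → R (Ψ α) = α) :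
    ∀ α β : ℝ, 0 ≤ α → 0 ≤ β → |Ψ α - Ψ β| ≤ gstar * |α - β| :=
  stmt7_general g h0 hpos gstar hgs gfact hgfact hZ R hR Ψ hΨpos hRΨ
end
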